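/- If M ⊆ [n]^d is a minimal non-basic subset, then its annihilation function is unique up to a multiplicative constant: any two non-trivial rational-valued annihilation functions of M are proportional (each is a rational scalar multiple of the other). -/

import Mathlib

/-- A finite subset `M ⊆ [n]^d` (the cube identified with `Fin d → Fin n`) is *basic*
if every function on `M` decomposes as a sum of univariate functions. -/
def IsBasic {n d : ℕ} (M : Finset (Fin d → Fin n)) : Prop :=
  ∀ f : (Fin d → Fin n) → ℝ, ∃ g : Fin d → Fin n → ℝ,
    ∀ x ∈ M, f x = ∑ i, g i (x i)

/-!
An annihilation function `c` of `M` is orthogonal to every separable function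
`x ↦ ∑ i, g i (x i)`; on a basic set the indicator of a point is separable, so `c` vanishes
there. If every proper subset of `M` is basic, the support of an annihilation function vanishing at some
point is a proper, hence basic, subset of `M`, so the function vanishes identically. Given
`c₁`, `c₂` and a point `x₀` with `c₁ x₀ ≠ 0`, the annihilation function
`c₂ - (c₂ x₀ / c₁ x₀) • c₁` vanishes at `x₀`, hence everywhere.
-/

open Finset

def IsAnnihilation {R : Type*} [AddCommMonoid R] {n d : ℕ} (M : Finset (Fin d → Fin n))
    (c : (Fin d → Fin n) → R) : Prop :=
  ∀ (i : Fin d) (j : Fin n), ∑ x ∈ M.filter (fun x => x i = j), c x = 0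

namespace IsAnnihilation

variable {R : Type*} {n d : ℕ} {M : Finset (Fin d → Fin n)} {c : (Fin d → Fin n) → R}

lemma map [AddCommMonoid R] {S F : Type*} [AddCommMonoid S] [FunLike F R S]
    [AddMonoidHomClass F R S] (φ : F) (hc : IsAnnihilation M c) :
    IsAnnihilation M (fun x => φ (c x)) := fun i j => by
  rw [← map_sum, hc i j, map_zero]

lemma sub_mul [CommRing R] {c' : (Fin d → Fin n) → R} (hc : IsAnnihilation M c)
    (hc' : IsAnnihilation M c') (q : R) : IsAnnihilation M (fun x => c x - q * c' x) :=
  fun i j => by rw [sum_sub_distrib, ← mul_sum, hc i j, hc' i j, mul_zero, sub_zero]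

lemma filter_ne_zero [AddCommMonoid R] [DecidableEq R] (hc : IsAnnihilation M c) :
    IsAnnihilation (M.filter (fun x => c x ≠ 0)) c := fun i j => by
  rw [filter_comm, sum_filter_ne_zero]
  exact hc i j

lemma sum_mul_separable_eq_zero [CommSemiring R] (hc : IsAnnihilation M c)
    (g : Fin d → Fin n → R) : ∑ x ∈ M, c x * ∑ i, g i (x i) = 0 := by
  simp_rw [mul_sum]
  rw [sum_comm]
  refine sum_eq_zero fun i _ => ?_
  rw [← sum_fiberwise M (fun x => x i)]
  refine sum_eq_zero fun j _ => ?_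
  calc ∑ x ∈ M.filter (fun x => x i = j), c x * g i (x i)
      = ∑ x ∈ M.filter (fun x => x i = j), c x * g i j :=
        sum_congr rfl fun x hx => by rw [(mem_filter.mp hx).2]
    _ = 0 := by rw [← sum_mul, hc i j, zero_mul]

end IsAnnihilation

lemma IsBasic.eq_zero_of_isAnnihilation {n d : ℕ} {K : Finset (Fin d → Fin n)}
    (hK : IsBasic K) {c : (Fin d → Fin n) → ℝ} (hc : IsAnnihilation K c) :
    ∀ y ∈ K, c y = 0 := by
  intro y hy
  obtain ⟨g, hg⟩ := hK (fun x => if x = y then 1 else 0)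
  calc c y = ∑ x ∈ K, c x * (if x = y then 1 else 0) := by simp [hy]
    _ = ∑ x ∈ K, c x * ∑ i, g i (x i) := sum_congr rfl fun x hx => by rw [hg x hx]
    _ = 0 := hc.sum_mul_separable_eq_zero g

lemma IsAnnihilation.eq_zero_of_minimal {n d : ℕ} {M : Finset (Fin d → Fin n)}
    (hmin : ∀ K ⊂ M, IsBasic K) {c : (Fin d → Fin n) → ℚ} (hc : IsAnnihilation M c)
    {x₀ : Fin d → Fin n} (hx₀ : x₀ ∈ M) (hcx₀ : c x₀ = 0) : ∀ x ∈ M, c x = 0 := by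
  have hsupp : M.filter (fun x => c x ≠ 0) ⊂ M :=
    (ssubset_iff_of_subset (filter_subset _ _)).mpr ⟨x₀, hx₀, by simp [hcx₀]⟩
  intro x hx
  by_contra hcx
  exact hcx <| Rat.cast_eq_zero.mp <|
    (hmin _ hsupp).eq_zero_of_isAnnihilation (hc.filter_ne_zero.map (Rat.castHom ℝ)) x
      (mem_filter.mpr ⟨hx, hcx⟩)

theorem annihilation_unique_of_minimal_general {n d : ℕ} (M : Finset (Fin d → Fin n))
    (hmin : ∀ K ⊂ M, IsBasic K)
    (c₁ c₂ : (Fin d → Fin n) → ℚ)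
    (h₁ : ∀ (i : Fin d) (j : Fin n), ∑ x ∈ M.filter (fun x => x i = j), c₁ x = 0)
    (h₂ : ∀ (i : Fin d) (j : Fin n), ∑ x ∈ M.filter (fun x => x i = j), c₂ x = 0)
    (hnt₁ : ∃ x ∈ M, c₁ x ≠ 0)
    (hnt₂ : ∃ x ∈ M, c₂ x ≠ 0) :
    ∃ q : ℚ, q ≠ 0 ∧ ∀ x ∈ M, c₂ x = q * c₁ x := by
  obtain ⟨x₀, hx₀, hc₁x₀⟩ := hnt₁
  have hc₂x₀ : c₂ x₀ ≠ 0 := by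
    obtain ⟨y, hy, hc₂y⟩ := hnt₂
    exact fun h => hc₂y (IsAnnihilation.eq_zero_of_minimal hmin h₂ hx₀ h y hy)
  set q := c₂ x₀ / c₁ x₀
  have hdiff : ∀ x ∈ M, c₂ x - q * c₁ x = 0 :=
    IsAnnihilation.eq_zero_of_minimal hmin (IsAnnihilation.sub_mul h₂ h₁ q) hx₀
      (by simp [q, hc₁x₀])
  exact ⟨q, div_ne_zero hc₂x₀ hc₁x₀, fun x hx => sub_eq_zero.mp (hdiff x hx)⟩

/-- If `M ⊆ [n]^d` is a minimal non-basic subset, then its annihilation function is unique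
up to a multiplicative constant: any two non-trivial (rational-valued) annihilation
functions of `M` are proportional. -/
theorem annihilation_unique_of_minimal {n d : ℕ} (M : Finset (Fin d → Fin n))
    (hnb : ¬ IsBasic M)
    (hmin : ∀ K ⊂ M, IsBasic K)
    (c₁ c₂ : (Fin d → Fin n) → ℚ)
    (h₁ : ∀ (i : Fin d) (j : Fin n), ∑ x ∈ M.filter (fun x => x i = j), c₁ x = 0)
    (h₂ : ∀ (i : Fin d) (j : Fin n), ∑ x ∈ M.filter (fun x => x i = j), c₂ x = 0)
    (hnt₁ : ∃ x ∈ M, c₁ x ≠ 0)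
    (hnt₂ : ∃ x ∈ M, c₂ x ≠ 0) :
    ∃ q : ℚ, q ≠ 0 ∧ ∀ x ∈ M, c₂ x = q * c₁ x :=
  annihilation_unique_of_minimal_general M hmin c₁ c₂ h₁ h₂ hnt₁ hnt₂
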